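/- Let γ : [0,τ₀] → ℝⁿ be Lipschitz, γ_l its arc-length reparameterization on [0, l(0,τ₀)], and f : ℝⁿ → ℝⁿ a map. If for every t ∈ [0,τ₀] with τ₂(t) < τ₀ one has lim_{r→τ₂(t)⁺} f(γ(r)) = f(γ(t)), then for every s ∈ [0, l(0,τ₀)), lim_{r→s⁺} f(γ_l(r)) = f(γ_l(s)). -/

import Mathlib

/-!
The arc length `l = arcLen γ 0` is continuous on `[0, τ₀]` with `l 0 = 0`, so every
`s < l τ₀` is a value `l t`. Additivity of the variation shows that `l` equals `s` on the
constancy interval `[t, τ₂(t)]` and exceeds `s` strictly beyond it; with the intermediate value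
theorem this makes every right neighbourhood of `s` contain the image under `l` of a right
neighbourhood of `τ₂(t)`. Since `γ_l ∘ l = γ`, the right limit of `f ∘ γ_l` at `s` is therefore
the right limit of `f ∘ γ` at `τ₂(t)`, which is `f (γ t) = f (γ_l s)` by hypothesis.
-/

open Set Filter Topology

/-- Arc length of `γ` on `[t₁, t₂]`: the supremum over partitions of `Σᵢ |γ(rᵢ) - γ(rᵢ₋₁)|`. -/
noncomputable def arcLen {n : ℕ} (γ : ℝ → EuclideanSpace ℝ (Fin n)) (t₁ t₂ : ℝ) : ℝ :=
  (eVariationOn γ (Set.Icc t₁ t₂)).toReal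

/-- Left endpoint of the maximal constancy interval of `γ` (on `[0, τ₀]`) containing `t`. -/
noncomputable def tau₁ {n : ℕ} (γ : ℝ → EuclideanSpace ℝ (Fin n)) (t : ℝ) : ℝ :=
  sInf {τ ∈ Set.Icc 0 t | ∀ r ∈ Set.Icc τ t, γ r = γ t}

/-- Right endpoint of the maximal constancy interval of `γ` on `[0, τ₀]` containing `t`. -/
noncomputable def tau₂ {n : ℕ} (γ : ℝ → EuclideanSpace ℝ (Fin n)) (τ₀ t : ℝ) : ℝ :=
  sSup {τ ∈ Set.Icc t τ₀ | ∀ r ∈ Set.Icc t τ, γ r = γ t}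

section IntermediateValue

variable {α δ : Type*} [ConditionallyCompleteLinearOrder α] [TopologicalSpace α] [OrderTopology α]
  [DenselyOrdered α] [LinearOrder δ] [TopologicalSpace δ] [OrderClosedTopology δ]

theorem nhdsGT_le_map_nhdsGT {l : α → δ} {a b : α} (hab : a < b) (hl : ContinuousOn l (Icc a b))
    (hlt : ∀ u ∈ Ioc a b, l a < l u) : 𝓝[>] (l a) ≤ map l (𝓝[>] a) := by
  intro B hB
  obtain ⟨u, hau, hu⟩ := (mem_nhdsGT_iff_exists_Ioo_subset' hab).1 (mem_map.1 hB)
  obtain ⟨d, had, hd⟩ := exists_between (lt_min hau hab)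
  have hdb : d ≤ b := hd.le.trans (min_le_right _ _)
  refine mem_of_superset (Ioc_mem_nhdsGT (hlt d ⟨had, hdb⟩)) ?_
  rintro y ⟨hay, hyd⟩
  obtain ⟨x, ⟨hax, hxd⟩, rfl⟩ :=
    intermediate_value_Icc had.le (hl.mono (Icc_subset_Icc_right hdb)) ⟨hay.le, hyd⟩
  exact hu ⟨hax.lt_of_ne (by rintro rfl; exact hay.false),
    hxd.trans_lt (hd.trans_le (min_le_left _ _))⟩

end IntermediateValue

section ArcLength

variable {n : ℕ} {γ : ℝ → EuclideanSpace ℝ (Fin n)} {a b c : ℝ}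

theorem LipschitzOnWith.boundedVariationOn_Icc {E : Type*} [PseudoEMetricSpace E] {f : ℝ → E}
    {κ : NNReal} {s : Set ℝ} (hf : LipschitzOnWith κ f s) (hab : a ≤ b) (hs : Icc a b ⊆ s) :
    BoundedVariationOn f (Icc a b) := by
  simpa using (hf.mono hs).locallyBoundedVariationOn a b (left_mem_Icc.2 hab) (right_mem_Icc.2 hab)

theorem arcLen_nonneg : 0 ≤ arcLen γ a b := ENNReal.toReal_nonneg

theorem arcLen_self : arcLen γ a a = 0 := by
  simp [arcLen]

theorem arcLen_add (hγ : BoundedVariationOn γ (Icc a c)) (hab : a ≤ b) (hbc : b ≤ c) :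
    arcLen γ a c = arcLen γ a b + arcLen γ b c := by
  have h := eVariationOn.Icc_add_Icc γ (s := Icc a c) hab hbc ⟨hab, hbc⟩
  rw [inter_eq_right.2 (Icc_subset_Icc_right hbc), inter_eq_right.2 (Icc_subset_Icc_left hab),
    inter_self] at h
  rw [arcLen, arcLen, arcLen, ← h, ENNReal.toReal_add (hγ.mono (Icc_subset_Icc_right hbc))
    (hγ.mono (Icc_subset_Icc_left hab))]

theorem arcLen_eq_zero_iff (hγ : BoundedVariationOn γ (Icc a b)) (hab : a ≤ b) :
    arcLen γ a b = 0 ↔ ∀ r ∈ Icc a b, γ r = γ a := by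
  simp only [arcLen, ENNReal.toReal_eq_zero_iff, or_iff_left hγ, eVariationOn.eq_zero_iff,
    edist_eq_zero]
  exact ⟨fun h r hr => h r hr a (left_mem_Icc.2 hab),
    fun h x hx y hy => (h x hx).trans (h y hy).symm⟩

theorem arcLen_le_mul {κ : NNReal} {s : Set ℝ} (hγ : LipschitzOnWith κ γ s) (hab : a ≤ b)
    (hs : Icc a b ⊆ s) : arcLen γ a b ≤ κ * (b - a) := by
  have hid : eVariationOn (id : ℝ → ℝ) (Icc a b) = ENNReal.ofReal (b - a) := by simp
  have h := hγ.comp_eVariationOn_le (g := id) hs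
  rw [hid] at h
  calc arcLen γ a b ≤ (κ * ENNReal.ofReal (b - a)).toReal := ENNReal.toReal_mono (by finiteness) h
    _ = κ * (b - a) := by
      rw [ENNReal.toReal_mul, ENNReal.coe_toReal, ENNReal.toReal_ofReal (sub_nonneg.2 hab)]

end ArcLength

section LipschitzCurve

variable {n : ℕ} {γ : ℝ → EuclideanSpace ℝ (Fin n)} {τ₀ : ℝ} {κ : NNReal}

theorem arcLen_zero_add (hγ : LipschitzOnWith κ γ (Icc 0 τ₀)) {a b : ℝ} (ha : 0 ≤ a)
    (hab : a ≤ b) (hb : b ≤ τ₀) : arcLen γ 0 b = arcLen γ 0 a + arcLen γ a b :=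
  arcLen_add (hγ.boundedVariationOn_Icc (ha.trans hab) (Icc_subset_Icc_right hb)) ha hab

theorem lipschitzOnWith_arcLen (hγ : LipschitzOnWith κ γ (Icc 0 τ₀)) :
    LipschitzOnWith κ (arcLen γ 0) (Icc 0 τ₀) := by
  refine LipschitzOnWith.of_le_add_mul κ fun x hx y hy => ?_
  rcases le_total x y with hxy | hyx
  · rw [arcLen_zero_add hγ hx.1 hxy hy.2]
    linarith [arcLen_nonneg (γ := γ) (a := x) (b := y),
      mul_nonneg κ.coe_nonneg (dist_nonneg (x := x) (y := y))]
  · rw [arcLen_zero_add hγ hy.1 hyx hx.2, Real.dist_eq, abs_of_nonneg (sub_nonneg.2 hyx)]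
    gcongr
    exact arcLen_le_mul hγ hyx (Icc_subset_Icc hy.1 hx.2)

theorem exists_arcLen_eq (hγ : LipschitzOnWith κ γ (Icc 0 τ₀)) (hτ₀ : 0 ≤ τ₀) {s : ℝ}
    (hs : s ∈ Icc 0 (arcLen γ 0 τ₀)) : ∃ t ∈ Icc 0 τ₀, arcLen γ 0 t = s :=
  intermediate_value_Icc hτ₀ (lipschitzOnWith_arcLen hγ).continuousOn (by rwa [arcLen_self])

end LipschitzCurve

section ConstancyInterval

variable {n : ℕ} {γ : ℝ → EuclideanSpace ℝ (Fin n)} {τ₀ t : ℝ}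

theorem nonempty_tau₂_set (ht : t ≤ τ₀) :
    {τ ∈ Icc t τ₀ | ∀ r ∈ Icc t τ, γ r = γ t}.Nonempty :=
  ⟨t, ⟨le_rfl, ht⟩, fun _ hr => congrArg γ (le_antisymm hr.2 hr.1)⟩

theorem le_tau₂_of_forall_eq {u : ℝ} (htu : t ≤ u) (hu : u ≤ τ₀)
    (h : ∀ r ∈ Icc t u, γ r = γ t) : u ≤ tau₂ γ τ₀ t :=
  le_csSup ⟨τ₀, fun _ hτ => hτ.1.2⟩ ⟨⟨htu, hu⟩, h⟩

theorem le_tau₂ (ht : t ≤ τ₀) : t ≤ tau₂ γ τ₀ t :=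
  le_tau₂_of_forall_eq le_rfl ht fun _ hr => congrArg γ (le_antisymm hr.2 hr.1)

theorem tau₂_le (ht : t ≤ τ₀) : tau₂ γ τ₀ t ≤ τ₀ :=
  csSup_le (nonempty_tau₂_set ht) fun _ hτ => hτ.1.2

theorem apply_eq_of_mem_Ico_tau₂ (ht : t ≤ τ₀) {r : ℝ} (hr : r ∈ Ico t (tau₂ γ τ₀ t)) :
    γ r = γ t := by
  obtain ⟨τ, hτ, hrτ⟩ := exists_lt_of_lt_csSup (nonempty_tau₂_set ht) hr.2
  exact hτ.2 r ⟨hr.1, hrτ.le⟩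

theorem apply_eq_of_mem_Icc_tau₂ (hγ : ContinuousOn γ (Icc t τ₀)) (ht : t ≤ τ₀) {r : ℝ}
    (hr : r ∈ Icc t (tau₂ γ τ₀ t)) : γ r = γ t := by
  rcases (le_tau₂ ht).eq_or_lt with h | h
  · rw [hr.1.antisymm (h ▸ hr.2)]
  · exact EqOn.of_subset_closure (fun r hr => apply_eq_of_mem_Ico_tau₂ ht hr)
      (hγ.mono (Icc_subset_Icc_right (tau₂_le ht))) continuousOn_const Ico_subset_Icc_self
      (closure_Ico h.ne).superset hr

end ConstancyInterval

section ArcLengthReparametrization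

variable {n : ℕ} {γ : ℝ → EuclideanSpace ℝ (Fin n)} {τ₀ t : ℝ} {κ : NNReal}

theorem arcLen_tau₂ (hγ : LipschitzOnWith κ γ (Icc 0 τ₀)) (ht : t ∈ Icc 0 τ₀) :
    arcLen γ 0 (tau₂ γ τ₀ t) = arcLen γ 0 t := by
  rw [arcLen_zero_add hγ ht.1 (le_tau₂ ht.2) (tau₂_le ht.2), add_eq_left,
    arcLen_eq_zero_iff (hγ.boundedVariationOn_Icc (le_tau₂ ht.2)
      (Icc_subset_Icc ht.1 (tau₂_le ht.2))) (le_tau₂ ht.2)]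
  exact fun r hr =>
    apply_eq_of_mem_Icc_tau₂ (hγ.continuousOn.mono (Icc_subset_Icc_left ht.1)) ht.2 hr

theorem arcLen_lt_of_tau₂_lt (hγ : LipschitzOnWith κ γ (Icc 0 τ₀)) (ht : t ∈ Icc 0 τ₀) {u : ℝ}
    (hu : u ∈ Ioc (tau₂ γ τ₀ t) τ₀) : arcLen γ 0 t < arcLen γ 0 u := by
  have htu : t ≤ u := (le_tau₂ ht.2).trans hu.1.le
  rw [arcLen_zero_add hγ ht.1 htu hu.2, lt_add_iff_pos_right]
  refine arcLen_nonneg.lt_of_ne' fun h => hu.1.not_ge (le_tau₂_of_forall_eq htu hu.2 ?_)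
  exact (arcLen_eq_zero_iff (hγ.boundedVariationOn_Icc htu (Icc_subset_Icc ht.1 hu.2)) htu).1 h

theorem tau₂_lt_of_arcLen_lt (hγ : LipschitzOnWith κ γ (Icc 0 τ₀)) (ht : t ∈ Icc 0 τ₀)
    (h : arcLen γ 0 t < arcLen γ 0 τ₀) : tau₂ γ τ₀ t < τ₀ := by
  refine (tau₂_le ht.2).lt_of_ne fun heq => h.ne ?_
  rw [← arcLen_tau₂ hγ ht, heq]

theorem nhdsGT_arcLen_le_map_nhdsGT_tau₂ (hγ : LipschitzOnWith κ γ (Icc 0 τ₀))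
    (ht : t ∈ Icc 0 τ₀) (hτ₂ : tau₂ γ τ₀ t < τ₀) :
    𝓝[>] (arcLen γ 0 t) ≤ map (arcLen γ 0) (𝓝[>] (tau₂ γ τ₀ t)) := by
  rw [← arcLen_tau₂ hγ ht]
  refine nhdsGT_le_map_nhdsGT hτ₂ ((lipschitzOnWith_arcLen hγ).continuousOn.mono
    (Icc_subset_Icc_left (ht.1.trans (le_tau₂ ht.2)))) fun u hu => ?_
  rw [arcLen_tau₂ hγ ht]
  exact arcLen_lt_of_tau₂_lt hγ ht hu

end ArcLengthReparametrization

theorem right_continuity_along_reparam {n : ℕ} (τ₀ : ℝ) (hτ₀ : 0 ≤ τ₀) (κ : NNReal)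
    (γ : ℝ → EuclideanSpace ℝ (Fin n)) (hγ : LipschitzOnWith κ γ (Set.Icc 0 τ₀))
    (γl : ℝ → EuclideanSpace ℝ (Fin n))
    (hγl : ∀ t ∈ Set.Icc 0 τ₀, γl (arcLen γ 0 t) = γ t)
    (f : EuclideanSpace ℝ (Fin n) → EuclideanSpace ℝ (Fin n))
    (hf : ∀ t ∈ Set.Icc 0 τ₀, tau₂ γ τ₀ t < τ₀ →
      Tendsto (fun r => f (γ r)) (nhdsWithin (tau₂ γ τ₀ t) (Set.Ioc (tau₂ γ τ₀ t) τ₀))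
        (nhds (f (γ t)))) :
    ∀ s ∈ Set.Ico 0 (arcLen γ 0 τ₀),
      Tendsto (fun r => f (γl r)) (nhdsWithin s (Set.Ioc s (arcLen γ 0 τ₀)))
        (nhds (f (γl s))) := by
  intro s hs
  obtain ⟨t, ht, rfl⟩ := exists_arcLen_eq hγ hτ₀ (Ico_subset_Icc_self hs)
  have hτ₂ := tau₂_lt_of_arcLen_lt hγ ht hs.2
  have hf' := hf t ht hτ₂
  rw [nhdsWithin_Ioc_eq_nhdsGT hτ₂] at hf'
  rw [nhdsWithin_Ioc_eq_nhdsGT hs.2, hγl t ht]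
  refine Tendsto.mono_left ?_ (nhdsGT_arcLen_le_map_nhdsGT_tau₂ hγ ht hτ₂)
  rw [tendsto_map'_iff]
  refine hf'.congr' ?_
  filter_upwards [Ioo_mem_nhdsGT hτ₂] with r hr
  rw [Function.comp_apply, hγl r ⟨ht.1.trans ((le_tau₂ ht.2).trans hr.1.le), hr.2.le⟩]
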